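/- arXiv:1204.3034 — 3 statements merged into one kernel-verified Lean document; each statement's English description precedes it below -/
import Mathlib

section
/- For a finite-horizon value function V_τ defined recursively by V_0(x) = 0 and V_{k+1}(x) = max{0, σ(x) + min_{r∈Ω} max_{u∈U} V_k(f(x,r,u))}, if V_∞(x) := sup_τ V_τ(x) is finite for all x, then V_∞ satisfies the fixed-point equation V_∞(x) = max{0, σ(x) + min_{r∈Ω} max_{u∈U} V_∞(f(x,r,u))} and is the minimal nonnegative solution of this equation. -/
/-!
The Bellman operator `T W x = max 0 (σ x + min_r max_u W (f x r u))` is monotone, and since `Ω`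
and `U` are finite it commutes with pointwise limits. As `V 0 = 0 ≤ T 0 = V 1`, monotonicity makes
`V τ = T^τ 0` increase to `V∞`, and letting `τ → ∞` in `V (τ + 1) = T (V τ)` shows `T V∞ = V∞`.
If `W ≥ 0` satisfies `T W ≤ W`, then `V 0 ≤ W`, and monotonicity of `T` gives `V τ ≤ W` for all `τ`.
-/

open Filter Topology

section Bellman

variable {X Ω U : Type*} [Fintype Ω] [Nonempty Ω] [Fintype U] [Nonempty U]

noncomputable def bellman (f : X → Ω → U → X) (σ : X → ℝ) (W : X → ℝ) (x : X) : ℝ :=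
  max 0 (σ x + Finset.univ.inf' Finset.univ_nonempty fun r =>
    Finset.univ.sup' Finset.univ_nonempty fun u => W (f x r u))

variable (f : X → Ω → U → X) (σ : X → ℝ)

theorem zero_le_bellman (W : X → ℝ) : 0 ≤ bellman f σ W := fun _ => le_max_left _ _

theorem bellman_mono : Monotone (bellman f σ) := by
  intro W W' hW x
  refine max_le_max le_rfl (add_le_add_right ?_ _)
  exact Finset.inf'_mono_fun fun _ _ => Finset.sup'_mono_fun fun _ _ => hW _

theorem tendsto_bellman {ι : Type*} {l : Filter ι} {W : ι → X → ℝ} {L : X → ℝ}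
    (hW : ∀ x, Tendsto (fun i => W i x) l (𝓝 (L x))) (x : X) :
    Tendsto (fun i => bellman f σ (W i) x) l (𝓝 (bellman f σ L x)) :=
  tendsto_const_nhds.max <| tendsto_const_nhds.add <|
    .finset_inf'_nhds_apply _ fun _ _ => .finset_sup'_nhds_apply _ fun _ _ => hW _

variable {f σ} {V : ℕ → X → ℝ}

theorem monotone_of_bellman_succ (hrec : ∀ k, V (k + 1) = bellman f σ (V k))
    (h01 : V 0 ≤ V 1) : Monotone V :=
  monotone_nat_of_le_succ fun n =>
    (bellman_mono f σ).seq_le_seq n h01 (fun k _ => (hrec k).le) fun k _ => (hrec (k + 1)).ge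

theorem le_of_bellman_le (hrec : ∀ k, V (k + 1) = bellman f σ (V k)) {W : X → ℝ}
    (h0 : V 0 ≤ W) (hW : bellman f σ W ≤ W) (k : ℕ) : V k ≤ W :=
  (bellman_mono f σ).seq_le_seq (y := fun _ => W) k h0 (fun k _ => (hrec k).le) fun _ _ => hW

theorem bellman_iSup_eq (hrec : ∀ k, V (k + 1) = bellman f σ (V k)) (hmono : Monotone V)
    (hbdd : ∀ x, BddAbove (Set.range fun τ => V τ x)) :
    bellman f σ (fun x => ⨆ τ, V τ x) = fun x => ⨆ τ, V τ x := by
  have hlim : ∀ x, Tendsto (fun τ => V τ x) atTop (𝓝 (⨆ τ, V τ x)) := fun x =>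
    tendsto_atTop_ciSup (fun _ _ hab => hmono hab x) (hbdd x)
  funext x
  refine tendsto_nhds_unique (tendsto_bellman f σ hlim x) ?_
  have hshift := (hlim x).comp (tendsto_add_atTop_nat 1)
  simpa only [Function.comp_def, hrec] using hshift

end Bellman

/-- If the finite-horizon value functions `V τ` (defined by `V 0 x = 0`
and `V (k+1) x = max 0 (σ x + min_r max_u V k (f x r u))`) have a finite pointwise
supremum `V∞ x = ⨆ τ, V τ x`, then `V∞` satisfies the Bellman fixed-point equation
and is the minimal nonnegative solution of that equation. -/
theorem value_sup_is_minimal_fixed_point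
    {X Ω U : Type*} [Fintype Ω] [Nonempty Ω] [Fintype U] [Nonempty U]
    (f : X → Ω → U → X) (σ : X → ℝ)
    (V : ℕ → X → ℝ)
    (h0 : ∀ x, V 0 x = 0)
    (hrec : ∀ k x, V (k + 1) x =
      max 0 (σ x + Finset.univ.inf' Finset.univ_nonempty (fun r =>
        Finset.univ.sup' Finset.univ_nonempty (fun u => V k (f x r u)))))
    (hbdd : ∀ x, BddAbove (Set.range fun τ => V τ x)) :
    (∀ x, (⨆ τ, V τ x) =
      max 0 (σ x + Finset.univ.inf' Finset.univ_nonempty (fun r =>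
        Finset.univ.sup' Finset.univ_nonempty (fun u => ⨆ τ, V τ (f x r u))))) ∧
    (∀ W : X → ℝ, (∀ x, 0 ≤ W x) →
      (∀ x, W x = max 0 (σ x + Finset.univ.inf' Finset.univ_nonempty (fun r =>
        Finset.univ.sup' Finset.univ_nonempty (fun u => W (f x r u))))) →
      ∀ x, (⨆ τ, V τ x) ≤ W x) := by
  have hstep : ∀ k, V (k + 1) = bellman f σ (V k) := fun k => funext (hrec k)
  have hV0 : V 0 = 0 := funext h0
  have hmono : Monotone V :=
    monotone_of_bellman_succ hstep (by rw [hstep 0, hV0]; exact zero_le_bellman f σ 0)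
  refine ⟨fun x => (congrFun (bellman_iSup_eq hstep hmono hbdd) x).symm,
    fun W hW0 hWfix x => ciSup_le fun τ => ?_⟩
  exact le_of_bellman_le hstep (hV0 ▸ hW0) (fun y => (hWfix y).ge) τ x
end

section
/- Let (A,B) be a controllable pair (A ∈ ℝ^{m×m}, B ∈ ℝ^m), U ⊂ ℝ a finite set, and Ξ ⊂ ℝ^m a bounded set. Then there exists a finite set X̃ ⊂ ℝ^m and a function ρ : Ξ → [−1,1]^m such that for every x_0 ∈ Ξ and every u_0,...,u_{m−1} ∈ U, the state x_m obtained from the dynamics x_{n+1} = A x_n + B ρ(x_0)_n − B u_n (n = 0,...,m−1) satisfies x_m ∈ X̃. -/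
/-!
Unrolling the dynamics gives `x m = A ^ m x₀ + Lc (ρ(x₀) - u)`, where `Lc` has columns
`A ^ (m - 1 - j) B`. Writing `A ^ m x₀ = Lc w` with `w = Lc⁻¹ A ^ m x₀` and choosing
`ρ(x₀) = ⌊w⌋ - w ∈ (-1, 0]` yields `x m = Lc (⌊w⌋ - u)`. As `x₀` ranges over the bounded set `Ξ`,
`⌊w⌋` takes finitely many integer values, and `u` ranges over the finite set `U ^ m`.
-/

open Matrix

theorem pow_mulVec_add_sum_sub_mulVec {n R : Type*} [Fintype n] [DecidableEq n] [CommRing R]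
    (A : Matrix n n R) (x : ℕ → n → R) (k : ℕ) :
    x k = A ^ k *ᵥ x 0 + ∑ i ∈ Finset.range k, A ^ (k - 1 - i) *ᵥ (x (i + 1) - A *ᵥ x i) := by
  induction k with
  | zero => simp
  | succ k ih =>
    have hshift : ∀ i ∈ Finset.range k,
        A ^ (k + 1 - 1 - i) *ᵥ (x (i + 1) - A *ᵥ x i)
          = A *ᵥ (A ^ (k - 1 - i) *ᵥ (x (i + 1) - A *ᵥ x i)) := by
      intro i hi
      rw [mulVec_mulVec, ← pow_succ', show k - 1 - i + 1 = k + 1 - 1 - i by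
        have := Finset.mem_range.mp hi; omega]
    rw [Finset.sum_range_succ, Finset.sum_congr rfl hshift, ← mulVec_sum,
      eq_sub_of_add_eq' ih.symm, pow_succ', ← mulVec_mulVec, mulVec_sub]
    simp

section Controllability

variable {R : Type*} [CommRing R] {m : ℕ} {A Lc : Matrix (Fin m) (Fin m) R} {B : Fin m → R}

theorem mulVec_eq_sum_pow_mulVec_smul
    (hLc : ∀ i j : Fin m, Lc i j = (A ^ (m - 1 - (j : ℕ)) *ᵥ B) i) (v : Fin m → R) :
    Lc *ᵥ v = ∑ j : Fin m, A ^ (m - 1 - (j : ℕ)) *ᵥ (v j • B) := by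
  ext i
  simp only [mulVec_smul, Finset.sum_apply, Pi.smul_apply, smul_eq_mul, ← hLc, mul_comm]
  rfl

theorem eq_pow_mulVec_add_mulVec_of_succ_eq
    (hLc : ∀ i j : Fin m, Lc i j = (A ^ (m - 1 - (j : ℕ)) *ᵥ B) i)
    (r : Fin m → R) (u : ℕ → R) (x : ℕ → Fin m → R)
    (hx : ∀ n : Fin m, x ((n : ℕ) + 1) = A *ᵥ x n + r n • B - u n • B) :
    x m = A ^ m *ᵥ x 0 + Lc *ᵥ fun j => r j - u j := by
  rw [pow_mulVec_add_sum_sub_mulVec A x m, Finset.sum_range fun i => A ^ (m - 1 - i) *ᵥ _,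
    mulVec_eq_sum_pow_mulVec_smul hLc]
  congr 1
  refine Finset.sum_congr rfl fun j _ => ?_
  rw [hx j, sub_smul]
  abel_nf

end Controllability

theorem finite_floor_image {ι : Type*} [Fintype ι] {S : Set (ι → ℝ)}
    (hS : Bornology.IsBounded S) : ((fun w : ι → ℝ => fun j => ⌊w j⌋) '' S).Finite := by
  obtain ⟨C, hC⟩ := hS.exists_norm_le
  refine (Set.Finite.pi fun _ => Set.finite_Icc ⌊-C⌋ ⌊C⌋).subset ?_
  rintro _ ⟨w, hw, rfl⟩ j -
  have hj := abs_le.mp ((norm_le_pi_norm w j).trans (hC w hw))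
  exact ⟨Int.floor_mono hj.1, Int.floor_mono hj.2⟩

theorem controllable_reach_finite_set_general
    {m : ℕ}
    (A : Matrix (Fin m) (Fin m) ℝ) (B : Fin m → ℝ)
    (Lc : Matrix (Fin m) (Fin m) ℝ)
    (hLc : ∀ i j : Fin m, Lc i j = (A ^ (m - 1 - (j : ℕ)) *ᵥ B) i)
    (hctrl : IsUnit Lc)
    (U : Finset ℝ)
    (Ξ : Set (Fin m → ℝ)) (hΞ : Bornology.IsBounded Ξ) :
    ∃ (Xt : Finset (Fin m → ℝ)) (ρ : (Fin m → ℝ) → Fin m → ℝ),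
      (∀ x₀ ∈ Ξ, ∀ n : Fin m, ρ x₀ n ∈ Set.Icc (-1 : ℝ) 1) ∧
      ∀ x₀ ∈ Ξ, ∀ u : ℕ → ℝ, (∀ n, u n ∈ U) →
        ∀ x : ℕ → Fin m → ℝ, x 0 = x₀ →
          (∀ n : Fin m, x ((n : ℕ) + 1) = A *ᵥ x n + ρ x₀ n • B - u n • B) →
          x m ∈ Xt := by
  classical
  let w : (Fin m → ℝ) →L[ℝ] Fin m → ℝ := (Lc⁻¹ * A ^ m).mulVecLin.toContinuousLinearMap
  have hLcw : ∀ x₀, Lc *ᵥ w x₀ = A ^ m *ᵥ x₀ := fun x₀ => by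
    simp [w, mulVec_mulVec, ← Matrix.mul_assoc,
      mul_nonsing_inv Lc ((isUnit_iff_isUnit_det Lc).mp hctrl)]
  have hfloor := finite_floor_image (w.lipschitz.isBounded_image hΞ)
  refine ⟨Finset.image₂ (fun (z : Fin m → ℤ) (v : Fin m → ℝ) => Lc *ᵥ fun j => (z j : ℝ) - v j)
      hfloor.toFinset (Fintype.piFinset fun _ => U),
    fun x₀ j => ⌊w x₀ j⌋ - w x₀ j, fun x₀ _ j => ?_, ?_⟩
  · exact ⟨by linarith [Int.sub_one_lt_floor (w x₀ j)], by linarith [Int.floor_le (w x₀ j)]⟩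
  rintro x₀ hx₀ u hu x rfl hx
  have hxm : x m = Lc *ᵥ fun j => (⌊w (x 0) j⌋ : ℝ) - u j := by
    rw [eq_pow_mulVec_add_mulVec_of_succ_eq hLc _ u x hx, ← hLcw, ← mulVec_add]
    congr 1
    ext j
    simp only [Pi.add_apply]
    ring
  rw [hxm]
  exact Finset.mem_image₂_of_mem (by simpa using ⟨x 0, hx₀, rfl⟩)
    (Fintype.mem_piFinset.mpr fun j => hu j)

/-- Lemma `finiteX`: For a controllable pair `(A,B)` (controllability
matrix invertible), a finite set `U ⊂ ℝ`, and a bounded set `Ξ ⊂ ℝ^m`, there exist a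
finite set `X̃ ⊂ ℝ^m` and a function `ρ : Ξ → [-1,1]^m` such that for every `x₀ ∈ Ξ`
and every disturbance sequence with values in `U`, the state reached in `m` steps by
`x (n+1) = A x n + ρ(x₀)_n • B - u n • B` lies in `X̃`. -/
theorem controllable_reach_finite_set
    {m : ℕ} (hm : 0 < m)
    (A : Matrix (Fin m) (Fin m) ℝ) (B : Fin m → ℝ)
    (Lc : Matrix (Fin m) (Fin m) ℝ)
    (hLc : ∀ i j : Fin m, Lc i j = (A ^ (m - 1 - (j : ℕ)) *ᵥ B) i)
    (hctrl : IsUnit Lc)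
    (U : Finset ℝ)
    (Ξ : Set (Fin m → ℝ)) (hΞ : Bornology.IsBounded Ξ) :
    ∃ (Xt : Finset (Fin m → ℝ)) (ρ : (Fin m → ℝ) → Fin m → ℝ),
      (∀ x₀ ∈ Ξ, ∀ n : Fin m, ρ x₀ n ∈ Set.Icc (-1 : ℝ) 1) ∧
      ∀ x₀ ∈ Ξ, ∀ u : ℕ → ℝ, (∀ n, u n ∈ U) →
        ∀ x : ℕ → Fin m → ℝ, x 0 = x₀ →
          (∀ n : Fin m, x ((n : ℕ) + 1) = A *ᵥ x n + ρ x₀ n • B - u n • B) →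
          x m ∈ Xt :=
  controllable_reach_finite_set_general A B Lc hLc hctrl U Ξ hΞ
end

section
/- Suppose A ∈ ℝ^{m×m} has an eigenvalue z_1 with |z_1| = 1 and eigenvector e_1, B ∈ ℝ^m, and the elements of U − [−1,1] include values of both signs with max_{u∈U} u > 1 and min_{u∈U} u < −1. If c ∈ ℝ^m is a left eigenvector of A for z_1 = 1 with c·B ≠ 0, then there is no bounded control-invariant set I for the system x⁺ = A x + B r − B u: for every bounded I there exists x ∈ I such that for every r ∈ [−1,1] some u ∈ U gives A x + B r − B u ∉ I. In fact, for any x and r ∈ [−1,1], choosing u appropriately forces |c·x⁺| ≥ |c·x| + δ for some fixed δ > 0, so trajectories can be driven unboundedly in the direction c. -/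
open Matrix

/-- Suppose `c` is a left eigenvector of `A` at eigenvalue `1`
(`c A = c`) with `c ⬝ B ≠ 0`, and the finite set `U` satisfies `min U < -1` and
`max U > 1`. Then there exists `δ > 0` such that from any state `x` and any
`r ∈ [-1,1]` some `u ∈ U` forces `|c ⬝ x⁺| ≥ |c ⬝ x| + δ`; consequently there is no
nonempty bounded control-invariant set for `x⁺ = A x + B r - B u`. -/
theorem no_bounded_control_invariant_set
    {m : ℕ}
    (A : Matrix (Fin m) (Fin m) ℝ) (B : Fin m → ℝ)
    (c : Fin m → ℝ) (hcA : c ᵥ* A = c) (hcB : c ⬝ᵥ B ≠ 0)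
    (U : Finset ℝ)
    (hUhi : ∃ u ∈ U, 1 < u) (hUlo : ∃ u ∈ U, u < -1) :
    (∃ δ > 0, ∀ (x : Fin m → ℝ), ∀ r ∈ Set.Icc (-1 : ℝ) 1, ∃ u ∈ U,
      |c ⬝ᵥ x| + δ ≤ |c ⬝ᵥ (A *ᵥ x + r • B - u • B)|) ∧
    ∀ I : Set (Fin m → ℝ), Bornology.IsBounded I → I.Nonempty →
      ∃ x ∈ I, ∀ r ∈ Set.Icc (-1 : ℝ) 1, ∃ u ∈ U,
        A *ᵥ x + r • B - u • B ∉ I := by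
  obtain ⟨up, hupU, hup⟩ := hUhi
  obtain ⟨um, humU, hum⟩ := hUlo
  set b : ℝ := c ⬝ᵥ B with hb
  set ε : ℝ := min (up - 1) (-1 - um) with hε
  have hε0 : 0 < ε := lt_min (by linarith) (by linarith)
  set δ : ℝ := |b| * ε with hδ
  have hδ0 : 0 < δ := mul_pos (abs_pos.mpr hcB) hε0
  have hdot : ∀ (x : Fin m → ℝ) (r s : ℝ),
      c ⬝ᵥ (A *ᵥ x + r • B - s • B) = c ⬝ᵥ x + (r - s) * b := by
    intro x r s
    rw [dotProduct_sub, dotProduct_add, dotProduct_smul, dotProduct_smul,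
      dotProduct_mulVec, hcA]
    simp [smul_eq_mul]; ring
  have key : ∀ (x : Fin m → ℝ), ∀ r ∈ Set.Icc (-1 : ℝ) 1, ∃ u ∈ U,
      |c ⬝ᵥ x| + δ ≤ |c ⬝ᵥ (A *ᵥ x + r • B - u • B)| := by
    intro x r hr
    obtain ⟨hr1, hr2⟩ := hr
    set y : ℝ := c ⬝ᵥ x with hy
    have hεp : ε ≤ up - 1 := min_le_left _ _
    have hεm : ε ≤ -1 - um := min_le_right _ _
    rcases hcB.lt_or_gt with hbneg | hbpos
    · rcases le_or_gt 0 y with hy0 | hy0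
      · refine ⟨up, hupU, ?_⟩
        rw [hdot]
        have hs : δ ≤ (r - up) * b := by
          have : |b| = -b := abs_of_neg hbneg
          rw [hδ, this]; nlinarith
        rw [abs_of_nonneg hy0]
        calc y + δ ≤ y + (r - up) * b := by linarith
          _ ≤ |y + (r - up) * b| := le_abs_self _
      · refine ⟨um, humU, ?_⟩
        rw [hdot]
        have hs : (r - um) * b ≤ -δ := by
          have : |b| = -b := abs_of_neg hbneg
          rw [hδ, this]; nlinarith
        rw [abs_of_neg hy0]
        calc -y + δ ≤ -(y + (r - um) * b) := by linarith
          _ ≤ |y + (r - um) * b| := neg_le_abs _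
    · rcases le_or_gt 0 y with hy0 | hy0
      · refine ⟨um, humU, ?_⟩
        rw [hdot]
        have hs : δ ≤ (r - um) * b := by
          have : |b| = b := abs_of_pos hbpos
          rw [hδ, this]; nlinarith
        rw [abs_of_nonneg hy0]
        calc y + δ ≤ y + (r - um) * b := by linarith
          _ ≤ |y + (r - um) * b| := le_abs_self _
      · refine ⟨up, hupU, ?_⟩
        rw [hdot]
        have hs : (r - up) * b ≤ -δ := by
          have : |b| = b := abs_of_pos hbpos
          rw [hδ, this]; nlinarith
        rw [abs_of_neg hy0]
        calc -y + δ ≤ -(y + (r - up) * b) := by linarith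
          _ ≤ |y + (r - up) * b| := neg_le_abs _
  refine ⟨⟨δ, hδ0, key⟩, ?_⟩
  intro I hIb hIne
  obtain ⟨M, hM⟩ := hIb.exists_norm_le
  set S : Set ℝ := (fun x => |c ⬝ᵥ x|) '' I with hS
  have hSne : S.Nonempty := hIne.image _
  have hSbdd : BddAbove S := by
    refine ⟨(∑ i, |c i|) * max M 0, ?_⟩
    rintro a ⟨x, hxI, rfl⟩
    have hx : ‖x‖ ≤ M := hM x hxI
    calc |c ⬝ᵥ x| ≤ ∑ i, |c i * x i| := by
          rw [dotProduct]; exact Finset.abs_sum_le_sum_abs _ _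
      _ ≤ ∑ i, |c i| * max M 0 := by
          apply Finset.sum_le_sum
          intro i _
          rw [abs_mul]
          refine mul_le_mul_of_nonneg_left ?_ (abs_nonneg _)
          exact le_trans (le_trans (norm_le_pi_norm x i) hx) (le_max_left _ _)
      _ = (∑ i, |c i|) * max M 0 := by rw [← Finset.sum_mul]
  set T : ℝ := sSup S with hT
  have : T - δ < T := by linarith
  obtain ⟨a, ⟨x, hxI, rfl⟩, hax⟩ := exists_lt_of_lt_csSup hSne this
  refine ⟨x, hxI, ?_⟩
  intro r hr
  obtain ⟨u, huU, hu⟩ := key x r hr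
  refine ⟨u, huU, fun hmem => ?_⟩
  have hle : |c ⬝ᵥ (A *ᵥ x + r • B - u • B)| ≤ T :=
    le_csSup hSbdd ⟨_, hmem, rfl⟩
  linarith
end
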